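/- Let n ≥ 2 be an integer. For every integer e with 0 ≤ e ≤ n, one has 2e + C(e,2) + C(n−e,2) ≥ ⌊n/2⌋·⌊(n−1)/2⌋ + n − 1, with equality when e = ⌊(n−2)/2⌋. -/

import Mathlib

/-!
Multiplying by 4 and completing the square gives
`4 (2e + C(e,2) + C(n-e,2)) = (2e + 2 - n)² + n² + 2n - 4`, while the right-hand side is
`4 (⌊n/2⌋⌊(n-1)/2⌋ + n - 1) = n² + 2n - 4 + (n mod 2)`. Since `2e + 2 - n ≡ n (mod 2)`, its
square is at least `n mod 2`, and `e = ⌊(n-2)/2⌋` makes `2e + 2 - n` equal to `-(n mod 2)`.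
-/

/-- `C2 x` is the binomial-type expression `x(x-1)/2`. -/
def C2 (x : ℤ) : ℤ := x * (x - 1) / 2

lemma two_mul_C2 (x : ℤ) : 2 * C2 x = x * (x - 1) :=
  Int.mul_ediv_cancel' (Int.even_mul_pred_self x).two_dvd

lemma four_mul_ediv_two_mul_sub_one_ediv_two (n : ℤ) :
    4 * ((n / 2) * ((n - 1) / 2)) = n * (n - 2) + n % 2 := by
  rcases Int.even_or_odd' n with ⟨k, rfl | rfl⟩
  · have h₁ : 2 * k / 2 = k := by omega
    have h₂ : (2 * k - 1) / 2 = k - 1 := by omega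
    have h₃ : 2 * k % 2 = 0 := by omega
    rw [h₁, h₂, h₃]; ring
  · have h₁ : (2 * k + 1) / 2 = k := by omega
    have h₂ : (2 * k + 1 - 1) / 2 = k := by omega
    have h₃ : (2 * k + 1) % 2 = 1 := by omega
    rw [h₁, h₂, h₃]; ring

lemma four_mul_two_mul_add_C2_add_C2 (n e : ℤ) :
    4 * (2 * e + C2 e + C2 (n - e)) = (2 * e + 2 - n) ^ 2 + n ^ 2 + 2 * n - 4 := by
  linear_combination 2 * two_mul_C2 e + 2 * two_mul_C2 (n - e)

lemma emod_two_le_sq (x : ℤ) : x % 2 ≤ x ^ 2 := by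
  rcases Int.emod_two_eq_zero_or_one x with h | h
  · rw [h]; positivity
  · have hx : x ≠ 0 := by rintro rfl; simp at h
    have : 1 ≤ x ^ 2 := by nlinarith [sq_pos_of_ne_zero hx]
    omega

lemma emod_two_sq (x : ℤ) : (x % 2) ^ 2 = x % 2 := by
  rcases Int.emod_two_eq_zero_or_one x with h | h <;> rw [h] <;> norm_num

theorem stmt_8_general (n : ℤ) :
    (∀ e : ℤ, 0 ≤ e → e ≤ n →
      (n / 2) * ((n - 1) / 2) + n - 1 ≤ 2 * e + C2 e + C2 (n - e)) ∧
    (2 * ((n - 2) / 2) + C2 ((n - 2) / 2) + C2 (n - (n - 2) / 2) =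
      (n / 2) * ((n - 1) / 2) + n - 1) := by
  have hT := four_mul_ediv_two_mul_sub_one_ediv_two n
  refine ⟨fun e _ _ => ?_, ?_⟩
  · have hparity : (2 * e + 2 - n) % 2 = n % 2 := by omega
    have hsq := emod_two_le_sq (2 * e + 2 - n)
    linarith [four_mul_two_mul_add_C2_add_C2 n e]
  · have hcentre : 2 * ((n - 2) / 2) + 2 - n = -(n % 2) := by omega
    have hE := four_mul_two_mul_add_C2_add_C2 n ((n - 2) / 2)
    rw [hcentre, neg_sq, emod_two_sq] at hE
    linarith

theorem stmt_8 (n : ℤ) (hn : 2 ≤ n) :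
    (∀ e : ℤ, 0 ≤ e → e ≤ n →
      (n / 2) * ((n - 1) / 2) + n - 1 ≤ 2 * e + C2 e + C2 (n - e)) ∧
    (2 * ((n - 2) / 2) + C2 ((n - 2) / 2) + C2 (n - (n - 2) / 2) =
      (n / 2) * ((n - 1) / 2) + n - 1) :=
  stmt_8_general n
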